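/- arXiv:1608.08079 — 3 statements merged into one kernel-verified Lean document; each statement's English description precedes it below -/
import Mathlib

section
/- Let c be a real number and let sequences of complex polynomials R_n be defined by R_0(z)=1, R_1(z)=(1+ic_1)z+(1-ic_1) and R_{n+1}(z)=[(1+ic_{n+1})z+(1-ic_{n+1})]R_n(z)-4d_{n+1} z R_{n-1}(z) for n≥1, where c_n=(-1)^n c and d_n>0. Then for every n≥0 the polynomial R_{2n} has real coefficients, and R_{2n+1}(z)=[(1-ic)z+(1+ic)]·S_n(z) for some polynomial S_n with real coefficients. -/
/-!
Write `L_c = (1 + i c) z + (1 - i c)`. The odd-indexed steps of the recurrence multiply by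
`L_{-c}` and the even-indexed ones by `L_c`, and
`L_c · L_{-c} = (1 + c²) z² + 2 (1 - c²) z + (1 + c²)` has real coefficients.
So if `R_{2n}` is real and `R_{2n+1} = L_{-c} S_n` with `S_n` real, then
`R_{2n+2} = L_c L_{-c} S_n - 4 d_{2n+2} z R_{2n}` is real and
`R_{2n+3} = L_{-c} (R_{2n+2} - 4 d_{2n+3} z S_n)`.
-/

open Polynomial Complex

namespace Polynomial

theorem C_mem_liftsRing {R S : Type*} [Ring R] [Ring S] (f : R →+* S) (r : R) :
    C (f r) ∈ liftsRing f :=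
  ⟨C r, map_C f⟩

theorem X_mem_liftsRing {R S : Type*} [Ring R] [Ring S] (f : R →+* S) :
    (X : S[X]) ∈ liftsRing f :=
  ⟨X, map_X f⟩

theorem mem_liftsRing_ofRealHom_iff {p : ℂ[X]} :
    p ∈ liftsRing ofRealHom ↔ ∀ k, (p.coeff k).im = 0 := by
  rw [← lifts_iff_liftsRing, lifts_iff_coeff_lifts]
  refine forall_congr' fun k => ⟨?_, fun h => ⟨(p.coeff k).re, Complex.ext rfl h.symm⟩⟩
  rintro ⟨r, hr⟩
  rw [← hr]
  exact ofReal_im r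

end Polynomial

noncomputable def linFactor (c : ℝ) : ℂ[X] := C (1 + I * c) * X + C (1 - I * c)

theorem linFactor_neg (c : ℝ) : linFactor (-c) = C (1 - I * c) * X + C (1 + I * c) := by
  rw [linFactor, ofReal_neg, mul_neg, sub_neg_eq_add, ← sub_eq_add_neg]

theorem linFactor_mul_linFactor_neg (c : ℝ) :
    linFactor c * linFactor (-c) =
      C ((1 + c ^ 2 : ℝ) : ℂ) * X ^ 2 + C ((2 - 2 * c ^ 2 : ℝ) : ℂ) * X
        + C ((1 + c ^ 2 : ℝ) : ℂ) := by
  have h_outer : ((1 + c ^ 2 : ℝ) : ℂ) = (1 + I * c) * (1 - I * c) := by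
    push_cast; linear_combination (c : ℂ) ^ 2 * I_sq
  have h_middle : ((2 - 2 * c ^ 2 : ℝ) : ℂ) = (1 + I * c) ^ 2 + (1 - I * c) ^ 2 := by
    push_cast; linear_combination -2 * (c : ℂ) ^ 2 * I_sq
  rw [h_outer, h_middle, linFactor_neg, linFactor]
  simp only [map_mul, map_add, map_pow]
  ring

theorem linFactor_mul_linFactor_neg_mem_liftsRing (c : ℝ) :
    linFactor c * linFactor (-c) ∈ liftsRing ofRealHom := by
  rw [linFactor_mul_linFactor_neg]
  have hC : ∀ r : ℝ, C (r : ℂ) ∈ liftsRing ofRealHom := C_mem_liftsRing ofRealHom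
  have hX := X_mem_liftsRing ofRealHom
  exact add_mem (add_mem (mul_mem (hC _) (pow_mem hX 2)) (mul_mem (hC _) hX)) (hC _)

theorem even_mem_liftsRing_and_odd_eq_linFactor_neg_mul (c : ℝ) (e : ℕ → ℝ)
    (R : ℕ → ℂ[X])
    (h0 : R 0 = 1) (h1 : R 1 = linFactor (-c))
    (heven : ∀ n,
      R (2 * n + 2) = linFactor c * R (2 * n + 1) - C (e (2 * n + 2) : ℂ) * X * R (2 * n))
    (hodd : ∀ n,
      R (2 * n + 3) = linFactor (-c) * R (2 * n + 2) - C (e (2 * n + 3) : ℂ) * X * R (2 * n + 1))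
    (n : ℕ) :
    R (2 * n) ∈ liftsRing ofRealHom ∧
      ∃ S ∈ liftsRing ofRealHom, R (2 * n + 1) = linFactor (-c) * S := by
  have hCX : ∀ r : ℝ, C (r : ℂ) * X ∈ liftsRing ofRealHom := fun r =>
    mul_mem (C_mem_liftsRing ofRealHom r) (X_mem_liftsRing ofRealHom)
  induction n with
  | zero => exact ⟨h0 ▸ one_mem _, 1, one_mem _, by rw [h1, mul_one]⟩
  | succ n ih =>
    show R (2 * n + 2) ∈ _ ∧ ∃ S ∈ _, R (2 * n + 3) = _
    obtain ⟨h_even_real, S, hS, h_odd_eq⟩ := ih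
    have h_next_real : R (2 * n + 2) ∈ liftsRing ofRealHom := by
      rw [heven, h_odd_eq, ← mul_assoc]
      exact sub_mem (mul_mem (linFactor_mul_linFactor_neg_mem_liftsRing c) hS)
        (mul_mem (hCX _) h_even_real)
    refine ⟨h_next_real, R (2 * n + 2) - C (e (2 * n + 3) : ℂ) * X * S,
      sub_mem h_next_real (mul_mem (hCX _) hS), ?_⟩
    rw [hodd, h_odd_eq]
    ring

theorem stmt_0_general (c : ℝ) (cseq d : ℕ → ℝ)
    (hc : ∀ n, 1 ≤ n → cseq n = (-1 : ℝ) ^ n * c)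
    (R : ℕ → Polynomial ℂ)
    (hR0 : R 0 = 1)
    (hR1 : R 1 = C (1 + I * (cseq 1 : ℂ)) * X + C (1 - I * (cseq 1 : ℂ)))
    (hRrec : ∀ n, 1 ≤ n →
      R (n + 1) = (C (1 + I * (cseq (n + 1) : ℂ)) * X + C (1 - I * (cseq (n + 1) : ℂ))) * R n
        - C (4 * (d (n + 1) : ℂ)) * X * R (n - 1)) :
    ∀ n : ℕ,
      (∀ k, ((R (2 * n)).coeff k).im = 0) ∧
      ∃ S : Polynomial ℂ, (∀ k, (S.coeff k).im = 0) ∧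
        R (2 * n + 1) = (C (1 - I * (c : ℂ)) * X + C (1 + I * (c : ℂ))) * S := by
  have hc_even : ∀ n, cseq (2 * n + 2) = c := fun n => by
    rw [hc _ (by omega), pow_add, pow_mul]; norm_num
  have hc_odd : ∀ n, cseq (2 * n + 1) = -c := fun n => by
    rw [hc _ (by omega), pow_add, pow_mul]; norm_num
  have key := even_mem_liftsRing_and_odd_eq_linFactor_neg_mul c (fun n => 4 * d n) R hR0
    (by rw [hR1, ← hc_odd 0]; rfl)
    (fun n => by rw [← hc_even n]; push_cast; exact hRrec (2 * n + 1) (by omega))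
    (fun n => by rw [← hc_odd (n + 1)]; push_cast; exact hRrec (2 * n + 2) (by omega))
  intro n
  obtain ⟨h_even_real, S, hS, h_odd_eq⟩ := key n
  refine ⟨mem_liftsRing_ofRealHom_iff.1 h_even_real, S, mem_liftsRing_ofRealHom_iff.1 hS, ?_⟩
  rw [h_odd_eq, linFactor_neg]

theorem stmt_0 (c : ℝ) (cseq d : ℕ → ℝ)
    (hc : ∀ n, 1 ≤ n → cseq n = (-1 : ℝ) ^ n * c)
    (hd : ∀ n, 1 ≤ n → 0 < d n)
    (R : ℕ → Polynomial ℂ)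
    (hR0 : R 0 = 1)
    (hR1 : R 1 = C (1 + I * (cseq 1 : ℂ)) * X + C (1 - I * (cseq 1 : ℂ)))
    (hRrec : ∀ n, 1 ≤ n →
      R (n + 1) = (C (1 + I * (cseq (n + 1) : ℂ)) * X + C (1 - I * (cseq (n + 1) : ℂ))) * R n
        - C (4 * (d (n + 1) : ℂ)) * X * R (n - 1)) :
    ∀ n : ℕ,
      (∀ k, ((R (2 * n)).coeff k).im = 0) ∧
      ∃ S : Polynomial ℂ, (∀ k, (S.coeff k).im = 0) ∧
        R (2 * n + 1) = (C (1 - I * (c : ℂ)) * X + C (1 + I * (c : ℂ))) * S :=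
  stmt_0_general c cseq d hc R hR0 hR1 hRrec
end

section
/- Let p be an even positive integer. Let {c_n}_{n≥1} be real with c_{n+p} = c_n for all n and c_{2n} = -c_{2n-1} for all n ≥ 1, and let {m_n}_{n≥1} be real with m_{n+p} = m_n for all n. Define τ_0 = 1, τ_n = τ_{n-1}(1-ic_n)/(1+ic_n), and α_{n-1} = conj(τ_{n-1})·(1 - 2m_n - i c_n)/(1 - i c_n). Then the sequence {α_n}_{n≥0} is periodic with period p: α_{n+p} = α_n for all n ≥ 0. -/
/-!
Because `c (2k+2) = -c (2k+1)`, the two factors `(1 - i c)/(1 + i c)` contributed by `2k+1` and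
`2k+2` cancel, so `τ (2k) = 1` and `τ (2k+1)` depends only on `c (2k+1)`. For even `p` this makes
`τ` periodic with period `p`, and then so is `α`, which is built from `τ`, `c` and `m` at the same
index.
-/

open Complex

noncomputable def cayleyRatio (c : ℝ) : ℂ := (1 - I * c) / (1 + I * c)

theorem one_add_I_mul_ofReal_ne_zero (c : ℝ) : 1 + I * c ≠ 0 := fun h => by
  simpa using congrArg re h

theorem one_sub_I_mul_ofReal_ne_zero (c : ℝ) : 1 - I * c ≠ 0 := fun h => by
  simpa using congrArg re h

theorem cayleyRatio_mul_cayleyRatio_neg (c : ℝ) : cayleyRatio c * cayleyRatio (-c) = 1 := by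
  rw [cayleyRatio, cayleyRatio, ofReal_neg, mul_neg, sub_neg_eq_add, ← sub_eq_add_neg,
    div_mul_div_comm, mul_comm (1 - I * c)]
  exact div_self (mul_ne_zero (one_add_I_mul_ofReal_ne_zero c) (one_sub_I_mul_ofReal_ne_zero c))

section PartialProducts

variable {M : Type*} [Monoid M] {f τ : ℕ → M}

theorem partialProd_two_mul_eq_one (h0 : τ 0 = 1) (hτ : ∀ n, τ (n + 1) = τ n * f (n + 1))
    (hf : ∀ k, f (2 * k + 1) * f (2 * k + 2) = 1) (k : ℕ) : τ (2 * k) = 1 := by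
  induction k with
  | zero => exact h0
  | succ k ih => rw [Nat.mul_succ, hτ, hτ, ih, one_mul]; exact hf k

theorem partialProd_add_even_period (h0 : τ 0 = 1) (hτ : ∀ n, τ (n + 1) = τ n * f (n + 1))
    (hf : ∀ k, f (2 * k + 1) * f (2 * k + 2) = 1) {p : ℕ} (hp : Even p)
    (hfper : ∀ n, f (n + 1 + p) = f (n + 1)) (n : ℕ) : τ (n + p) = τ n := by
  have hτeven := partialProd_two_mul_eq_one h0 hτ hf
  obtain ⟨q, rfl⟩ := hp
  rcases n.even_or_odd' with ⟨k, rfl | rfl⟩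
  · rw [show 2 * k + (q + q) = 2 * (k + q) by ring, hτeven, hτeven]
  · rw [show 2 * k + 1 + (q + q) = 2 * (k + q) + 1 by ring, hτ, hτ, hτeven, hτeven,
      show 2 * (k + q) + 1 = 2 * k + 1 + (q + q) by ring, hfper]

end PartialProducts

theorem stmt_8_general (p : ℕ) (hpeven : Even p)
    (cseq m : ℕ → ℝ)
    (hcper : ∀ n, 1 ≤ n → cseq (n + p) = cseq n)
    (hcalt : ∀ n, 1 ≤ n → cseq (2 * n) = -cseq (2 * n - 1))
    (hmper : ∀ n, 1 ≤ n → m (n + p) = m n)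
    (τ : ℕ → ℂ) (hτ0 : τ 0 = 1)
    (hτ : ∀ n, 1 ≤ n → τ n = τ (n - 1) * ((1 - I * (cseq n : ℂ)) / (1 + I * (cseq n : ℂ))))
    (α : ℕ → ℂ)
    (hα : ∀ n, 1 ≤ n → α (n - 1) = starRingEnd ℂ (τ (n - 1)) *
      ((1 - 2 * (m n : ℂ) - I * (cseq n : ℂ)) / (1 - I * (cseq n : ℂ)))) :
    ∀ n : ℕ, α (n + p) = α n := by
  have hτsucc (n : ℕ) : τ (n + 1) = τ n * cayleyRatio (cseq (n + 1)) :=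
    hτ (n + 1) n.succ_pos
  have hαsucc (n : ℕ) := hα (n + 1) n.succ_pos
  have hpair (k : ℕ) : cayleyRatio (cseq (2 * k + 1)) * cayleyRatio (cseq (2 * k + 2)) = 1 := by
    rw [show 2 * k + 2 = 2 * (k + 1) by ring, hcalt (k + 1) (by omega),
      show 2 * (k + 1) - 1 = 2 * k + 1 by omega, cayleyRatio_mul_cayleyRatio_neg]
  have hτper := partialProd_add_even_period (f := fun n => cayleyRatio (cseq n)) hτ0 hτsucc
    hpair hpeven fun n => congrArg cayleyRatio (hcper (n + 1) n.succ_pos)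
  intro n
  simp only [Nat.add_sub_cancel] at hαsucc
  rw [hαsucc, hαsucc, add_right_comm, hcper _ n.succ_pos, hmper _ n.succ_pos, hτper]

theorem stmt_8 (p : ℕ) (hp : 0 < p) (hpeven : Even p)
    (cseq m : ℕ → ℝ)
    (hcper : ∀ n, 1 ≤ n → cseq (n + p) = cseq n)
    (hcalt : ∀ n, 1 ≤ n → cseq (2 * n) = -cseq (2 * n - 1))
    (hmper : ∀ n, 1 ≤ n → m (n + p) = m n)
    (τ : ℕ → ℂ) (hτ0 : τ 0 = 1)
    (hτ : ∀ n, 1 ≤ n → τ n = τ (n - 1) * ((1 - I * (cseq n : ℂ)) / (1 + I * (cseq n : ℂ))))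
    (α : ℕ → ℂ)
    (hα : ∀ n, 1 ≤ n → α (n - 1) = starRingEnd ℂ (τ (n - 1)) *
      ((1 - 2 * (m n : ℂ) - I * (cseq n : ℂ)) / (1 - I * (cseq n : ℂ)))) :
    ∀ n : ℕ, α (n + p) = α n :=
  stmt_8_general p hpeven cseq m hcper hcalt hmper τ hτ0 hτ α hα
end

section
/- Let b₁, b₂ ∈ (-1,1) and c ∈ R. Set α_{2n} = (b₁ + ic)/(1 + ic) and α_{2n+1} = (b₂ - ic)/(1 + ic) for all n ≥ 0. Define the transfer matrices A(α,z) = (1-|α|²)^{-1/2}·[[z, -conj(α)],[-αz, 1]] and T₂(z) = A(α₁,z)·A(α₀,z), and Δ(z) = z^{-1}·Tr(T₂(z)). Then for every real θ, Δ(e^{iθ}) = 2·[(1+c²)cos θ + b₁b₂ - c²] / √((1-b₁²)(1-b₂²)). -/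
/-!
For any α₀, α₁ the trace of the unnormalized product `[[z, -ᾱ₁], [-α₁z, 1]]·[[z, -ᾱ₀], [-α₀z, 1]]`
is `z² + 1 + 2 Re(ᾱ₁α₀) z`, so on the unit circle `z⁻¹ · Tr = 2 cos θ + 2 Re(ᾱ₁α₀)`.
For the given coefficients `Re(ᾱ₁α₀) = (b₁b₂ - c²)/(1 + c²)` and `1 - |αⱼ|² = (1 - b²)/(1 + c²)`,
and the normalizing factors contribute `(1 + c²)/√((1 - b₁²)(1 - b₂²))`.
-/

open Complex ComplexConjugate

lemma trace_transfer_mul (a₁ a₀ z : ℂ) :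
    (!![z, -conj a₁; -a₁ * z, 1] * !![z, -conj a₀; -a₀ * z, 1]).trace =
      z ^ 2 + 1 + 2 * (conj a₁ * a₀).re * z := by
  have h : conj a₁ * a₀ + a₁ * conj a₀ = 2 * (conj a₁ * a₀).re := by
    simpa using add_conj (conj a₁ * a₀)
  simp only [Matrix.trace_fin_two, Matrix.mul_apply, Fin.sum_univ_two, Matrix.of_apply,
    Matrix.cons_val', Matrix.cons_val_zero, Matrix.cons_val_one, Matrix.empty_val',
    Matrix.cons_val_fin_one]
  linear_combination z * h

lemma exp_I_mul_inv_mul_quadratic (w : ℂ) (θ : ℝ) :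
    (exp (I * θ))⁻¹ * (exp (I * θ) ^ 2 + 1 + w * exp (I * θ)) = 2 * Real.cos θ + w := by
  have h2cos : exp (I * θ) + exp (-(I * θ)) = 2 * Real.cos θ := by
    rw [ofReal_cos, two_cos, mul_comm, neg_mul]
  rw [← h2cos, exp_neg]
  field_simp [exp_ne_zero]

lemma sq_norm_ofReal_add_I_mul (b c : ℝ) : ‖(b : ℂ) + I * c‖ ^ 2 = b ^ 2 + c ^ 2 := by
  rw [Complex.sq_norm, mul_comm, normSq_add_mul_I]

lemma sq_norm_ofReal_sub_I_mul (b c : ℝ) : ‖(b : ℂ) - I * c‖ ^ 2 = b ^ 2 + c ^ 2 := by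
  simpa [sub_eq_add_neg] using sq_norm_ofReal_add_I_mul b (-c)

lemma one_sub_sq_norm_div (b c : ℝ) (w : ℂ) (hw : ‖w‖ ^ 2 = b ^ 2 + c ^ 2) :
    1 - ‖w / (1 + I * c)‖ ^ 2 = (1 - b ^ 2) / (1 + c ^ 2) := by
  have h : ‖1 + I * (c : ℂ)‖ ^ 2 = 1 + c ^ 2 := by
    rw [Complex.sq_norm, mul_comm, ← ofReal_one, normSq_add_mul_I]; ring
  rw [norm_div, div_pow, hw, h]
  field_simp
  ring

lemma re_conj_mul_div (b₁ b₂ c : ℝ) :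
    (conj ((b₂ - I * c) / (1 + I * c)) * ((b₁ + I * c) / (1 + I * c))).re =
      (b₁ * b₂ - c ^ 2) / (1 + c ^ 2) := by
  have hden : (1 + -I * c) * (1 + I * c) = ((1 + c ^ 2 : ℝ) : ℂ) := by
    push_cast; linear_combination (-(c : ℂ) ^ 2) * I_sq
  have hnum : (b₂ - -I * c) * (b₁ + I * c) =
      ((b₁ * b₂ - c ^ 2 : ℝ) : ℂ) + ((c * (b₁ + b₂) : ℝ) : ℂ) * I := by
    push_cast; linear_combination (c : ℂ) ^ 2 * I_sq
  simp only [map_div₀, map_sub, map_add, map_one, map_mul, conj_I, conj_ofReal]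
  rw [div_mul_div_comm, hden, hnum, div_ofReal_re, add_re, ofReal_re, re_ofReal_mul, I_re,
    mul_zero, add_zero]

lemma rpow_neg_half_div (x d : ℝ) (hx : 0 < x) (hd : 0 ≤ d) :
    (x / d) ^ (-(1 : ℝ) / 2) = √d / √x := by
  rw [neg_div, Real.rpow_neg (by positivity), ← Real.sqrt_eq_rpow, Real.sqrt_div' _ hd, inv_div]

theorem stmt_13 (b₁ b₂ c : ℝ) (hb₁ : b₁ ∈ Set.Ioo (-1 : ℝ) 1) (hb₂ : b₂ ∈ Set.Ioo (-1 : ℝ) 1)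
    (α : ℕ → ℂ)
    (hα0 : ∀ n, α (2 * n) = ((b₁ : ℂ) + I * (c : ℂ)) / (1 + I * (c : ℂ)))
    (hα1 : ∀ n, α (2 * n + 1) = ((b₂ : ℂ) - I * (c : ℂ)) / (1 + I * (c : ℂ)))
    (A : ℂ → ℂ → Matrix (Fin 2) (Fin 2) ℂ)
    (hA : ∀ a z, A a z = (((1 - ‖a‖ ^ 2 : ℝ) ^ (-(1 : ℝ) / 2) : ℝ) : ℂ) •
      !![z, -starRingEnd ℂ a; -a * z, 1])
    (T₂ : ℂ → Matrix (Fin 2) (Fin 2) ℂ)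
    (hT : ∀ z, T₂ z = A (α 1) z * A (α 0) z)
    (Δ : ℂ → ℂ)
    (hΔ : ∀ z, Δ z = z⁻¹ * (T₂ z).trace) :
    ∀ θ : ℝ, Δ (Complex.exp (I * θ)) =
      ((2 * ((1 + c ^ 2) * Real.cos θ + b₁ * b₂ - c ^ 2) /
        Real.sqrt ((1 - b₁ ^ 2) * (1 - b₂ ^ 2)) : ℝ) : ℂ) := by
  intro θ
  have hx₁ : 0 < 1 - b₁ ^ 2 := by nlinarith [hb₁.1, hb₁.2]
  have hx₂ : 0 < 1 - b₂ ^ 2 := by nlinarith [hb₂.1, hb₂.2]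
  have hc : 0 < 1 + c ^ 2 := by positivity
  rw [hΔ, hT, hA, hA, Matrix.smul_mul, Matrix.mul_smul, smul_smul, Matrix.trace_smul,
    smul_eq_mul, trace_transfer_mul, mul_left_comm, exp_I_mul_inv_mul_quadratic, ← ofReal_mul]
  rw [show α 0 = _ from hα0 0, show α 1 = _ from hα1 0, re_conj_mul_div,
    one_sub_sq_norm_div b₁ c _ (sq_norm_ofReal_add_I_mul b₁ c),
    one_sub_sq_norm_div b₂ c _ (sq_norm_ofReal_sub_I_mul b₂ c),
    rpow_neg_half_div _ _ hx₁ hc.le, rpow_neg_half_div _ _ hx₂ hc.le]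
  have hreal : √(1 + c ^ 2) / √(1 - b₂ ^ 2) * (√(1 + c ^ 2) / √(1 - b₁ ^ 2)) *
      (2 * Real.cos θ + 2 * ((b₁ * b₂ - c ^ 2) / (1 + c ^ 2))) =
      2 * ((1 + c ^ 2) * Real.cos θ + b₁ * b₂ - c ^ 2) / √((1 - b₁ ^ 2) * (1 - b₂ ^ 2)) := by
    have hs₁ := Real.sqrt_pos.2 hx₁
    have hs₂ := Real.sqrt_pos.2 hx₂
    rw [Real.sqrt_mul hx₁.le]
    field_simp
    rw [Real.sq_sqrt hc.le]
    ring
  exact_mod_cast hreal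
end
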